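/- arXiv:2511.15477 — 3 statements merged into one kernel-verified Lean document; each statement's English description precedes it below -/
import Mathlib

section
/- Let φ be a semiflow on a compact set Z ⊂ ℝⁿ generated by a vector field f that is L-Lipschitz on Z. Assume there is a ball B around the equilibrium z* on which trajectories contract pairwise: ‖φ(t,x₀) - φ(t,y₀)‖ ≤ c·e^{-λt}‖x₀ - y₀‖ for all x₀, y₀ ∈ B, t ≥ 0, with c ≥ 1, λ > 0. Assume further that there exists T* > 0 with φ(t, z₀) ∈ B for all z₀ ∈ Z and t ≥ T*. Then the system is incrementally exponentially stable on Z: for all x₀, y₀ ∈ Z and t ≥ 0, ‖φ(t,x₀) - φ(t,y₀)‖ ≤ K·e^{-λt}‖x₀ - y₀‖ with K = c·e^{(L+λ)T*}. -/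
theorem local_contraction_implies_IES_on_Z
    (n : ℕ) (φ : ℝ → EuclideanSpace ℝ (Fin n) → EuclideanSpace ℝ (Fin n))
    (f : EuclideanSpace ℝ (Fin n) → EuclideanSpace ℝ (Fin n))
    (Z B : Set (EuclideanSpace ℝ (Fin n))) (hZc : IsCompact Z)
    (hZinv : ∀ t : ℝ, 0 ≤ t → ∀ z₀ ∈ Z, φ t z₀ ∈ Z)
    (L : ℝ) (hL : 0 ≤ L) (hf : LipschitzOnWith (Real.toNNReal L) f Z)
    (hflow : ∀ z₀ ∈ Z, ∀ t : ℝ, 0 ≤ t → HasDerivAt (fun τ => φ τ z₀) (f (φ t z₀)) t)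
    (c lam : ℝ) (hc : 1 ≤ c) (hlam : 0 < lam)
    (hloc : ∀ x₀ ∈ B, ∀ y₀ ∈ B, ∀ t : ℝ, 0 ≤ t →
      ‖φ t x₀ - φ t y₀‖ ≤ c * Real.exp (-lam * t) * ‖x₀ - y₀‖)
    (Tstar : ℝ) (hTstar : 0 < Tstar)
    (hB : ∀ z₀ ∈ Z, ∀ t : ℝ, Tstar ≤ t → φ t z₀ ∈ B)
    (hφ0 : ∀ z, φ 0 z = z)
    (hφadd : ∀ t s : ℝ, 0 ≤ t → 0 ≤ s → ∀ z, φ (t + s) z = φ t (φ s z)) :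
    ∀ x₀ ∈ Z, ∀ y₀ ∈ Z, ∀ t : ℝ, 0 ≤ t →
      ‖φ t x₀ - φ t y₀‖ ≤ (c * Real.exp ((L + lam) * Tstar)) * Real.exp (-lam * t) * ‖x₀ - y₀‖ := by
  -- Grönwall bound on [0, T] for any x₀, y₀ ∈ Z
  have gron : ∀ x₀ ∈ Z, ∀ y₀ ∈ Z, ∀ T : ℝ, 0 ≤ T →
      ‖φ T x₀ - φ T y₀‖ ≤ Real.exp (L * T) * ‖x₀ - y₀‖ := by
    intro x₀ hx y₀ hy T hT
    have key := norm_le_gronwallBound_of_norm_deriv_right_le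
      (f := fun τ => φ τ x₀ - φ τ y₀) (f' := fun τ => f (φ τ x₀) - f (φ τ y₀))
      (δ := ‖x₀ - y₀‖) (K := L) (ε := 0) (a := 0) (b := T)
      (by
        apply ContinuousOn.sub
        · intro τ hτ
          exact ((hflow x₀ hx τ hτ.1).continuousAt).continuousWithinAt
        · intro τ hτ
          exact ((hflow y₀ hy τ hτ.1).continuousAt).continuousWithinAt)
      (by
        intro τ hτ
        exact (((hflow x₀ hx τ hτ.1).sub (hflow y₀ hy τ hτ.1)).hasDerivWithinAt))
      (by simp [hφ0])
      (by
        intro τ hτ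
        have h1 : φ τ x₀ ∈ Z := hZinv τ hτ.1 x₀ hx
        have h2 : φ τ y₀ ∈ Z := hZinv τ hτ.1 y₀ hy
        have := hf.dist_le_mul _ h1 _ h2
        rw [dist_eq_norm, dist_eq_norm] at this
        simpa [Real.coe_toNNReal L hL] using this)
    have := key T ⟨hT, le_refl T⟩
    simpa [gronwallBound_ε0, mul_comm] using this
  intro x₀ hx y₀ hy t ht
  rcases le_or_gt t Tstar with hcase | hcase
  · -- small time: Grönwall suffices
    have h1 := gron x₀ hx y₀ hy t ht
    have h2 : Real.exp (L * t) ≤ c * Real.exp ((L + lam) * Tstar) * Real.exp (-lam * t) := by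
      have : Real.exp (L * t) ≤ Real.exp ((L + lam) * Tstar + (-lam * t)) := by
        apply Real.exp_le_exp.mpr
        nlinarith [Real.exp_pos (L * t)]
      calc Real.exp (L * t) ≤ Real.exp ((L + lam) * Tstar + (-lam * t)) := this
        _ = 1 * (Real.exp ((L + lam) * Tstar) * Real.exp (-lam * t)) := by
            rw [Real.exp_add]; ring
        _ ≤ c * Real.exp ((L + lam) * Tstar) * Real.exp (-lam * t) := by
            nlinarith [mul_pos (Real.exp_pos ((L + lam) * Tstar)) (Real.exp_pos (-lam * t))]
    calc ‖φ t x₀ - φ t y₀‖ ≤ Real.exp (L * t) * ‖x₀ - y₀‖ := h1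
      _ ≤ c * Real.exp ((L + lam) * Tstar) * Real.exp (-lam * t) * ‖x₀ - y₀‖ := by
          apply mul_le_mul_of_nonneg_right h2 (norm_nonneg _)
  · -- large time: t = (t - Tstar) + Tstar
    have hts : 0 ≤ t - Tstar := by linarith
    have hsplit : ∀ z, φ t z = φ (t - Tstar) (φ Tstar z) := by
      intro z
      have := hφadd (t - Tstar) Tstar hts hTstar.le z
      simpa using this
    have hxB : φ Tstar x₀ ∈ B := hB x₀ hx Tstar le_rfl
    have hyB : φ Tstar y₀ ∈ B := hB y₀ hy Tstar le_rfl
    have h1 := hloc _ hxB _ hyB (t - Tstar) hts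
    have h2 := gron x₀ hx y₀ hy Tstar hTstar.le
    rw [hsplit x₀, hsplit y₀]
    calc ‖φ (t - Tstar) (φ Tstar x₀) - φ (t - Tstar) (φ Tstar y₀)‖
        ≤ c * Real.exp (-lam * (t - Tstar)) * ‖φ Tstar x₀ - φ Tstar y₀‖ := h1
      _ ≤ c * Real.exp (-lam * (t - Tstar)) * (Real.exp (L * Tstar) * ‖x₀ - y₀‖) := by
          apply mul_le_mul_of_nonneg_left h2
          positivity
      _ = c * Real.exp ((L + lam) * Tstar) * Real.exp (-lam * t) * ‖x₀ - y₀‖ := by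
          have he : Real.exp (-lam * (t - Tstar)) * Real.exp (L * Tstar)
              = Real.exp ((L + lam) * Tstar) * Real.exp (-lam * t) := by
            rw [← Real.exp_add, ← Real.exp_add]; ring_nf
          linear_combination (c * ‖x₀ - y₀‖) * he
end

section
/- Consider an impulsive system whose flow contracts between impulses with rate λ and overshoot k ≥ 1 (‖Δ(b⁻)‖ ≤ k·e^{-λ(b-a)}‖Δ(a⁺)‖ on impulse-free intervals [a,b)), and whose jumps are nonexpansive (‖Δ(σ⁺)‖ ≤ ‖Δ(σ⁻)‖ at each impulse time σ). If the number N(t₂, t₁) of impulses in (t₁, t₂] satisfies the average dwell-time bound N(t₂,t₁) ≤ N₀ + (t₂ - t₁)/τ_a for all t₂ ≥ t₁ ≥ 0, then for all t₂ ≥ t₁ ≥ 0, ‖Δ(t₂)‖ ≤ k^{N₀+1}·e^{-(λ - ln k / τ_a)(t₂ - t₁)}·‖Δ(t₁)‖. In particular, if λ > (ln k)/τ_a, the difference Δ converges to zero exponentially. -/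
/-!
Between consecutive impulses the flow estimate applies, and the nonexpansive jump is already
absorbed in it, so chaining it across the `n` impulses of `(t₁, t₂]` costs one factor `k` per
impulse-free piece: `Δ t₂ ≤ k ^ (n + 1) e^{-λ (t₂ - t₁)} Δ t₁`. The average dwell-time bound
turns `k ^ n` into at most `k ^ N₀ e^{(ln k / τ_a) (t₂ - t₁)}`.
-/

open Set Filter Topology Real

section ImpulseTrain

variable {S : Set ℝ} {t₁ t₂ : ℝ}

lemma exists_first_mem_inter_Ioc (hfin : (S ∩ Ioc t₁ t₂).Finite)
    (hne : (S ∩ Ioc t₁ t₂).Nonempty) :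
    ∃ σ ∈ S ∩ Ioc t₁ t₂, S ∩ Ioo t₁ σ = ∅ ∧ S ∩ Ioc σ t₂ = (S ∩ Ioc t₁ t₂) \ {σ} := by
  set T := S ∩ Ioc t₁ t₂
  have hσT : sInf T ∈ T := hne.csInf_mem hfin
  have hσ_le : ∀ x ∈ T, sInf T ≤ x := fun x hx => csInf_le hfin.bddBelow hx
  refine ⟨sInf T, hσT, ?_, ?_⟩
  · refine eq_empty_of_forall_notMem fun x ⟨hxS, hx₁, hxσ⟩ => ?_
    exact (hσ_le x ⟨hxS, hx₁, hxσ.le.trans hσT.2.2⟩).not_gt hxσ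
  · ext x
    constructor
    · rintro ⟨hxS, hσx, hx₂⟩
      exact ⟨⟨hxS, hσT.2.1.trans hσx, hx₂⟩, hσx.ne'⟩
    · rintro ⟨hxT, hxσ⟩
      exact ⟨hxT.1, (hσ_le x hxT).lt_of_ne (Ne.symm hxσ), hxT.2.2⟩

variable {k lam : ℝ} {Δ : ℝ → ℝ}

lemma le_pow_ncard_succ_mul_exp (hk : 0 ≤ k)
    (hflow : ∀ a b : ℝ, 0 ≤ a → a ≤ b → S ∩ Ioo a b = ∅ →
      Δ b ≤ k * exp (-lam * (b - a)) * Δ a)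
    (hfin : (S ∩ Ioc t₁ t₂).Finite) (h₀ : 0 ≤ t₁) (h₁₂ : t₁ ≤ t₂) :
    Δ t₂ ≤ k ^ ((S ∩ Ioc t₁ t₂).ncard + 1) * exp (-lam * (t₂ - t₁)) * Δ t₁ := by
  induction hn : (S ∩ Ioc t₁ t₂).ncard generalizing t₁ with
  | zero =>
    have hempty : S ∩ Ioo t₁ t₂ = ∅ :=
      subset_empty_iff.1 <| ((ncard_eq_zero hfin).1 hn) ▸
        inter_subset_inter_right S Ioo_subset_Ioc_self
    simpa using hflow t₁ t₂ h₀ h₁₂ hempty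
  | succ n ih =>
    obtain ⟨σ, hσ, hgap, hrest⟩ :=
      exists_first_mem_inter_Ioc hfin ((ncard_pos hfin).1 (by omega))
    have hfirst : Δ σ ≤ k * exp (-lam * (σ - t₁)) * Δ t₁ :=
      hflow t₁ σ h₀ hσ.2.1.le hgap
    have hlater : Δ t₂ ≤ k ^ (n + 1) * exp (-lam * (t₂ - σ)) * Δ σ := by
      refine ih (hrest ▸ hfin.sdiff) (h₀.trans hσ.2.1.le) hσ.2.2 ?_
      rw [hrest, ncard_sdiff_singleton_of_mem hσ, hn, Nat.add_sub_cancel]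
    calc Δ t₂ ≤ k ^ (n + 1) * exp (-lam * (t₂ - σ)) * (k * exp (-lam * (σ - t₁)) * Δ t₁) :=
          hlater.trans (mul_le_mul_of_nonneg_left hfirst (by positivity))
      _ = k ^ (n + 1 + 1) * exp (-lam * (t₂ - t₁)) * Δ t₁ := by
          rw [pow_succ _ (n + 1), show -lam * (t₂ - t₁) = -lam * (t₂ - σ) + -lam * (σ - t₁) by ring,
            exp_add]
          ring

end ImpulseTrain

lemma pow_le_pow_mul_exp_of_le_add_div {k τ s : ℝ} {n N₀ : ℕ} (hk : 1 ≤ k)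
    (hn : (n : ℝ) ≤ N₀ + s / τ) :
    k ^ n ≤ k ^ N₀ * exp (log k / τ * s) := by
  have hk₀ : 0 < k := one_pos.trans_le hk
  calc k ^ n = k ^ (n : ℝ) := (rpow_natCast k n).symm
    _ ≤ k ^ ((N₀ : ℝ) + s / τ) := rpow_le_rpow_of_exponent_le hk hn
    _ = k ^ N₀ * exp (log k / τ * s) := by
      rw [rpow_add hk₀, rpow_natCast, rpow_def_of_pos hk₀, mul_div_assoc', div_mul_eq_mul_div]

lemma tendsto_zero_of_le_mul_exp_neg {f : ℝ → ℝ} {C μ : ℝ} (hμ : 0 < μ) (hf : ∀ t, 0 ≤ f t)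
    (hle : ∀ t, 0 ≤ t → f t ≤ C * exp (-μ * t)) :
    Tendsto f atTop (𝓝 0) := by
  have hexp : Tendsto (fun t => C * exp (-μ * t)) atTop (𝓝 0) := by
    simpa using (tendsto_exp_atBot.comp
      (tendsto_id.const_mul_atTop_of_neg (neg_lt_zero.2 hμ))).const_mul C
  exact squeeze_zero' (.of_forall hf) ((eventually_ge_atTop 0).mono hle) hexp

theorem IES_under_average_dwell_time_general
    (k lam τa : ℝ) (N₀ : ℕ) (hk : 1 ≤ k)
    (S : Set ℝ) (hSfin : ∀ t : ℝ, (S ∩ Set.Icc 0 t).Finite)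
    (Δ : ℝ → ℝ) (hΔpos : ∀ t, 0 ≤ Δ t)
    (hflow : ∀ a b : ℝ, 0 ≤ a → a ≤ b → S ∩ Set.Ioo a b = ∅ →
      Δ b ≤ k * Real.exp (-lam * (b - a)) * Δ a)
    (hdwell : ∀ t₁ t₂ : ℝ, 0 ≤ t₁ → t₁ ≤ t₂ →
      ((S ∩ Set.Ioc t₁ t₂).ncard : ℝ) ≤ (N₀ : ℝ) + (t₂ - t₁) / τa) :
    (∀ t₁ t₂ : ℝ, 0 ≤ t₁ → t₁ ≤ t₂ →
      Δ t₂ ≤ k ^ (N₀ + 1) * Real.exp (-(lam - Real.log k / τa) * (t₂ - t₁)) * Δ t₁) ∧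
    (Real.log k / τa < lam → Filter.Tendsto Δ Filter.atTop (nhds 0)) := by
  have hbound : ∀ t₁ t₂ : ℝ, 0 ≤ t₁ → t₁ ≤ t₂ →
      Δ t₂ ≤ k ^ (N₀ + 1) * exp (-(lam - log k / τa) * (t₂ - t₁)) * Δ t₁ := by
    intro t₁ t₂ h₀ h₁₂
    have hfin : (S ∩ Ioc t₁ t₂).Finite :=
      (hSfin t₂).subset fun x hx => ⟨hx.1, h₀.trans hx.2.1.le, hx.2.2⟩
    have hpow := pow_le_pow_mul_exp_of_le_add_div hk (hdwell t₁ t₂ h₀ h₁₂)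
    calc Δ t₂ ≤ k ^ ((S ∩ Ioc t₁ t₂).ncard + 1) * exp (-lam * (t₂ - t₁)) * Δ t₁ :=
          le_pow_ncard_succ_mul_exp (zero_le_one.trans hk) hflow hfin h₀ h₁₂
      _ ≤ k ^ N₀ * exp (log k / τa * (t₂ - t₁)) * k * exp (-lam * (t₂ - t₁)) * Δ t₁ := by
          rw [pow_succ]; gcongr; exact hΔpos t₁
      _ = k ^ (N₀ + 1) * exp (-(lam - log k / τa) * (t₂ - t₁)) * Δ t₁ := by
          rw [pow_succ, show -(lam - log k / τa) * (t₂ - t₁) =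
            log k / τa * (t₂ - t₁) + -lam * (t₂ - t₁) by ring, exp_add]
          ring
  refine ⟨hbound, fun hlt => ?_⟩
  refine tendsto_zero_of_le_mul_exp_neg (C := k ^ (N₀ + 1) * Δ 0) (sub_pos.2 hlt) hΔpos
    fun t ht => ?_
  simpa only [sub_zero, mul_right_comm] using hbound 0 t le_rfl ht

/-- IES under an average dwell-time condition: the flow contracts with rate `lam` and
overshoot `k` on impulse-free intervals (the jump at the right endpoint, being
nonexpansive, is absorbed in the estimate), and the number of impulses in `(t₁, t₂]`
satisfies `N ≤ N₀ + (t₂ - t₁)/τa`. Then the trajectory difference `Δ` decays with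
rate `lam - ln k / τa`. -/
theorem IES_under_average_dwell_time
    (k lam τa : ℝ) (N₀ : ℕ) (hk : 1 ≤ k) (hlam : 0 < lam) (hτa : 0 < τa)
    (S : Set ℝ) (hSfin : ∀ t : ℝ, (S ∩ Set.Icc 0 t).Finite)
    (Δ : ℝ → ℝ) (hΔpos : ∀ t, 0 ≤ Δ t)
    (hflow : ∀ a b : ℝ, 0 ≤ a → a ≤ b → S ∩ Set.Ioo a b = ∅ →
      Δ b ≤ k * Real.exp (-lam * (b - a)) * Δ a)
    (hdwell : ∀ t₁ t₂ : ℝ, 0 ≤ t₁ → t₁ ≤ t₂ →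
      ((S ∩ Set.Ioc t₁ t₂).ncard : ℝ) ≤ (N₀ : ℝ) + (t₂ - t₁) / τa) :
    (∀ t₁ t₂ : ℝ, 0 ≤ t₁ → t₁ ≤ t₂ →
      Δ t₂ ≤ k ^ (N₀ + 1) * Real.exp (-(lam - Real.log k / τa) * (t₂ - t₁)) * Δ t₁) ∧
    (Real.log k / τa < lam → Filter.Tendsto Δ Filter.atTop (nhds 0)) :=
  IES_under_average_dwell_time_general k lam τa N₀ hk S hSfin Δ hΔpos hflow hdwell
end

section
/- Combining the dwell-time contraction theorem with the periodic counting bound: if between impulses trajectories contract as ‖Δ(t₂)‖ ≤ k e^{-λ(t₂-t₁)}‖Δ(t₁)‖ (k ≥ 1, λ > 0), jumps are nonexpansive, and impulses are periodic with period T satisfying 1/T < λ/ln k, then trajectories starting from any two initial conditions under the same periodic impulse train converge to each other exponentially with rate λ - (ln k)/T > 0 and prefactor k². -/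
/-- IES under periodic impulse trains: between impulses the trajectory difference
contracts with constants `(k, lam)`, jumps (absorbed at the right endpoint of each
impulse-free interval) are nonexpansive, and impulses occur at times `ℓT`.
If `1/T < lam / ln k` (equivalently `ln k / T < lam`), the two trajectories converge
to each other exponentially with rate `lam - ln k / T` and prefactor `k²`. -/
theorem IES_periodic_impulse_train
    (k lam T : ℝ) (hk : 1 ≤ k) (hlam : 0 < lam) (hT : 0 < T)
    (hrate : Real.log k / T < lam)
    (S : Set ℝ) (hS : S = {σ : ℝ | ∃ ℓ : ℕ, 1 ≤ ℓ ∧ σ = (ℓ : ℝ) * T})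
    (Δ : ℝ → ℝ) (hΔpos : ∀ t, 0 ≤ Δ t)
    (hflow : ∀ a b : ℝ, 0 ≤ a → a ≤ b → S ∩ Set.Ioo a b = ∅ →
      Δ b ≤ k * Real.exp (-lam * (b - a)) * Δ a) :
    (0 < lam - Real.log k / T) ∧
    (∀ t : ℝ, 0 ≤ t → Δ t ≤ k ^ 2 * Real.exp (-(lam - Real.log k / T) * t) * Δ 0) ∧
    Filter.Tendsto Δ Filter.atTop (nhds 0) := by
  have hk0 : (0:ℝ) < k := lt_of_lt_of_le one_pos hk
  have hlogk : 0 ≤ Real.log k := Real.log_nonneg hk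
  have hc : 0 < lam - Real.log k / T := sub_pos.mpr hrate
  -- emptiness of S ∩ Ioo (n*T) b for b ≤ (n+1)*T
  have hempty : ∀ (n : ℕ) (b : ℝ), b ≤ ((n:ℝ)+1)*T → S ∩ Set.Ioo ((n:ℝ)*T) b = ∅ := by
    intro n b hb
    rw [Set.eq_empty_iff_forall_notMem]
    rintro σ ⟨hσS, hσ1, hσ2⟩
    rw [hS] at hσS
    obtain ⟨ℓ, hℓ1, rfl⟩ := hσS
    have h1 : (n:ℝ) < (ℓ:ℝ) := lt_of_mul_lt_mul_right (by linarith) hT.le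
    have h2 : (ℓ:ℝ) < (n:ℝ)+1 := lt_of_mul_lt_mul_right (by nlinarith) hT.le
    have h1' : n < ℓ := by exact_mod_cast h1
    have h2' : ℓ < n + 1 := by exact_mod_cast h2
    omega
  -- contraction at the grid points
  have key : ∀ n : ℕ, Δ ((n:ℝ)*T) ≤ k ^ n * Real.exp (-lam * ((n:ℝ)*T)) * Δ 0 := by
    intro n
    induction n with
    | zero => simp
    | succ n ih =>
      have hstep := hflow ((n:ℝ)*T) (((n:ℝ)+1)*T)
        (by positivity) (by nlinarith) (hempty n _ le_rfl)
      have hkexp : 0 ≤ k * Real.exp (-lam * (((n:ℝ)+1)*T - (n:ℝ)*T)) := by positivity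
      have hcast : (((n+1:ℕ)):ℝ) = (n:ℝ)+1 := by push_cast; ring
      rw [hcast]
      calc Δ (((n:ℝ)+1)*T)
          ≤ k * Real.exp (-lam * (((n:ℝ)+1)*T - (n:ℝ)*T)) * Δ ((n:ℝ)*T) := hstep
        _ ≤ k * Real.exp (-lam * (((n:ℝ)+1)*T - (n:ℝ)*T)) *
              (k ^ n * Real.exp (-lam * ((n:ℝ)*T)) * Δ 0) :=
            mul_le_mul_of_nonneg_left ih hkexp
        _ = k ^ (n+1) * Real.exp (-lam * (((n:ℝ)+1)*T)) * Δ 0 := by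
            rw [show -lam * (((n:ℝ)+1)*T) =
              -lam * (((n:ℝ)+1)*T - (n:ℝ)*T) + -lam * ((n:ℝ)*T) by ring, Real.exp_add]
            ring
  -- main exponential bound
  have main : ∀ t : ℝ, 0 ≤ t →
      Δ t ≤ k ^ 2 * Real.exp (-(lam - Real.log k / T) * t) * Δ 0 := by
    intro t ht
    set n : ℕ := ⌊t / T⌋₊ with hn
    have hdiv0 : 0 ≤ t / T := div_nonneg ht hT.le
    have h1 : (n:ℝ) ≤ t / T := Nat.floor_le hdiv0
    have h1' : (n:ℝ) * T ≤ t := (le_div_iff₀ hT).mp h1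
    have h2 : t / T < (n:ℝ) + 1 := Nat.lt_floor_add_one (t / T)
    have h2' : t < ((n:ℝ) + 1) * T := (div_lt_iff₀ hT).mp h2
    have hstep := hflow ((n:ℝ)*T) t (by positivity) h1' (hempty n t h2'.le)
    have hkexp : 0 ≤ k * Real.exp (-lam * (t - (n:ℝ)*T)) := by positivity
    have hchain : Δ t ≤ k ^ (n+1) * Real.exp (-lam * t) * Δ 0 := by
      calc Δ t ≤ k * Real.exp (-lam * (t - (n:ℝ)*T)) * Δ ((n:ℝ)*T) := hstep
        _ ≤ k * Real.exp (-lam * (t - (n:ℝ)*T)) *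
              (k ^ n * Real.exp (-lam * ((n:ℝ)*T)) * Δ 0) :=
            mul_le_mul_of_nonneg_left (key n) hkexp
        _ = k ^ (n+1) * Real.exp (-lam * t) * Δ 0 := by
            rw [show -lam * t = -lam * (t - (n:ℝ)*T) + -lam * ((n:ℝ)*T) by ring,
              Real.exp_add]
            ring
    -- bound k^(n+1) ≤ k^2 * exp ((log k / T) * t)
    have hpow : k ^ (n+1) ≤ k ^ 2 * Real.exp ((Real.log k / T) * t) := by
      have hkn : k ^ n = Real.exp ((n:ℝ) * Real.log k) := by
        rw [Real.exp_nat_mul, Real.exp_log hk0]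
      have hle : (n:ℝ) * Real.log k ≤ (Real.log k / T) * t := by
        have : (n:ℝ) * Real.log k ≤ (t / T) * Real.log k :=
          mul_le_mul_of_nonneg_right h1 hlogk
        calc (n:ℝ) * Real.log k ≤ (t / T) * Real.log k := this
          _ = (Real.log k / T) * t := by ring
      calc k ^ (n+1) = k * k ^ n := by ring
        _ = k * Real.exp ((n:ℝ) * Real.log k) := by rw [hkn]
        _ ≤ k * Real.exp ((Real.log k / T) * t) :=
            mul_le_mul_of_nonneg_left (Real.exp_le_exp.mpr hle) hk0.le
        _ ≤ k ^ 2 * Real.exp ((Real.log k / T) * t) := by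
            apply mul_le_mul_of_nonneg_right _ (Real.exp_pos _).le
            nlinarith
    calc Δ t ≤ k ^ (n+1) * Real.exp (-lam * t) * Δ 0 := hchain
      _ ≤ (k ^ 2 * Real.exp ((Real.log k / T) * t)) * Real.exp (-lam * t) * Δ 0 := by
          apply mul_le_mul_of_nonneg_right _ (hΔpos 0)
          exact mul_le_mul_of_nonneg_right hpow (Real.exp_pos _).le
      _ = k ^ 2 * Real.exp (-(lam - Real.log k / T) * t) * Δ 0 := by
          rw [show -(lam - Real.log k / T) * t = Real.log k / T * t + -lam * t by ring,
            Real.exp_add]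
          ring
  refine ⟨hc, main, ?_⟩
  -- squeeze to zero
  have hupper : Filter.Tendsto (fun t => k ^ 2 * Real.exp (-(lam - Real.log k / T) * t) * Δ 0)
      Filter.atTop (nhds 0) := by
    have hexp : Filter.Tendsto (fun t : ℝ => Real.exp (-(lam - Real.log k / T) * t))
        Filter.atTop (nhds 0) := by
      have h3 : Filter.Tendsto (fun t : ℝ => (lam - Real.log k / T) * t)
          Filter.atTop Filter.atTop :=
        Filter.Tendsto.const_mul_atTop hc Filter.tendsto_id
      have := Real.tendsto_exp_neg_atTop_nhds_zero.comp h3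
      exact this.congr fun t => by simp only [Function.comp]; ring_nf
    have := (hexp.const_mul (k ^ 2)).mul_const (Δ 0)
    simpa using this
  refine squeeze_zero' (Filter.Eventually.of_forall hΔpos) ?_ hupper
  filter_upwards [Filter.eventually_ge_atTop 0] with t ht using main t ht
end
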